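/- In a strict symmetric pivotal category, the right curl of the dual satisfies γ_{X*} = (γ_X^{-1})* for every object X, where (·)* denotes the left dual of a morphism. -/

import Mathlib

/-!
Sliding the cap `ev_X` through the crossing rewrites both curls with the single cup
`u = ψ ∘ coev_{X*} : 𝟙 ⟶ X ⊗ X*`: the left curl becomes the zig-zag `(id ⊗ ev_X) ∘ (u ⊗ id)`
on `X`, and `γ_{X*}` becomes the zig-zag `(ev_X ⊗ id) ∘ (id ⊗ u)` on `X*`. The mate of the
former is the latter, because feeding `coev_X` into the first zig-zag and straightening with
the snake identity for `(X, X*)` gives back `u`.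
-/

open CategoryTheory MonoidalCategory

universe v u

variable {C : Type u} [Category.{v} C] [MonoidalCategory C]

/-- The data of a pivotal object in a monoidal category: an object `X`, a candidate
dual `Xd`, and evaluation/coevaluation morphisms for both `(X, Xd)` and `(Xd, X)`. -/
structure PivData (C : Type u) [Category.{v} C] [MonoidalCategory C] where
  X : C
  Xd : C
  ev : Xd ⊗ X ⟶ 𝟙_ C
  coev : 𝟙_ C ⟶ X ⊗ Xd
  evd : X ⊗ Xd ⟶ 𝟙_ C
  coevd : 𝟙_ C ⟶ Xd ⊗ X

/-- `(A, Ad, ev, coev)` is a duality: the zig-zag identities hold. -/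
def IsDuality {A Ad : C} (ev : Ad ⊗ A ⟶ 𝟙_ C) (coev : 𝟙_ C ⟶ A ⊗ Ad) : Prop :=
  (coev ▷ A ≫ (α_ A Ad A).hom ≫ A ◁ ev = (λ_ A).hom ≫ (ρ_ A).inv) ∧
  (Ad ◁ coev ≫ (α_ Ad A Ad).inv ≫ ev ▷ Ad = (ρ_ Ad).hom ≫ (λ_ Ad).inv)

/-- A pivotal object: both `(X, Xd, ev, coev)` and `(Xd, X, evd, coevd)` are dualities. -/
def PivData.IsPivotal (P : PivData C) : Prop :=
  IsDuality P.ev P.coev ∧ IsDuality P.evd P.coevd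

/-- The left-dual mate `f* : Q.Xd ⟶ P.Xd` of `f : P.X ⟶ Q.X`, using the first dualities. -/
def PivData.mate (P Q : PivData C) (f : P.X ⟶ Q.X) : Q.Xd ⟶ P.Xd :=
  (ρ_ Q.Xd).inv ≫ Q.Xd ◁ P.coev ≫ Q.Xd ◁ (f ▷ P.Xd) ≫ (α_ Q.Xd Q.X P.Xd).inv ≫
    Q.ev ▷ P.Xd ≫ (λ_ P.Xd).hom

/-- The mate `g* : P.X ⟶ Q.X` of `g : Q.Xd ⟶ P.Xd`, using the second dualities. -/
def PivData.dmate (P Q : PivData C) (g : Q.Xd ⟶ P.Xd) : P.X ⟶ Q.X :=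
  (ρ_ P.X).inv ≫ P.X ◁ Q.coevd ≫ P.X ◁ (g ▷ Q.X) ≫ (α_ P.X P.Xd Q.X).inv ≫
    P.evd ▷ Q.X ≫ (λ_ Q.X).hom

/-- The double dual `f** = (f*)*` of a morphism between pivotal objects. -/
def PivData.ddual (P Q : PivData C) (f : P.X ⟶ Q.X) : P.X ⟶ Q.X :=
  PivData.dmate P Q (PivData.mate P Q f)

variable [SymmetricCategory C]

/-- The right positive curl `c^R_X = (id ⊗ ev_{X*}) ∘ (ψ_{X,X} ⊗ id) ∘ (id ⊗ coev_X)`. -/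
def PivData.cR (P : PivData C) : P.X ⟶ P.X :=
  (ρ_ P.X).inv ≫ P.X ◁ P.coev ≫ (α_ P.X P.X P.Xd).inv ≫
    (β_ P.X P.X).hom ▷ P.Xd ≫ (α_ P.X P.X P.Xd).hom ≫ P.X ◁ P.evd ≫ (ρ_ P.X).hom

/-- The left positive curl `c^L_X = (ev_X ⊗ id) ∘ (id ⊗ ψ_{X,X}) ∘ (coev_{X*} ⊗ id)`. -/
def PivData.cL (P : PivData C) : P.X ⟶ P.X :=
  (λ_ P.X).inv ≫ P.coevd ▷ P.X ≫ (α_ P.Xd P.X P.X).hom ≫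
    P.Xd ◁ (β_ P.X P.X).hom ≫ (α_ P.Xd P.X P.X).inv ≫ P.ev ▷ P.X ≫ (λ_ P.X).hom

/-- The dual pivotal object `(X*, X, ev_{X*}, coev_{X*}, ev_X, coev_X)`. -/
def PivData.dual (P : PivData C) : PivData C :=
  ⟨P.Xd, P.X, P.evd, P.coevd, P.ev, P.coev⟩

lemma coev_comp_zigzag_whiskerRight {D : Type*} [Category D] [MonoidalCategory D] {A B : D}
    (ev : B ⊗ A ⟶ 𝟙_ D) (coev : 𝟙_ D ⟶ A ⊗ B)
    (hsnake : B ◁ coev ≫ (α_ B A B).inv ≫ ev ▷ B = (ρ_ B).hom ≫ (λ_ B).inv)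
    (u : 𝟙_ D ⟶ A ⊗ B) :
    coev ≫ ((λ_ A).inv ≫ u ▷ A ≫ (α_ A B A).hom ≫ A ◁ ev ≫ (ρ_ A).hom) ▷ B = u :=
  calc _ = (λ_ (𝟙_ D)).inv ≫ 𝟙_ D ◁ coev ≫ u ▷ (A ⊗ B) ≫ (α_ A B (A ⊗ B)).hom ≫
          A ◁ (α_ B A B).inv ≫ A ◁ (ev ▷ B) ≫ A ◁ (λ_ B).hom := by monoidal
    _ = (λ_ (𝟙_ D)).inv ≫ u ▷ 𝟙_ D ≫ (A ⊗ B) ◁ coev ≫ (α_ A B (A ⊗ B)).hom ≫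
          A ◁ (α_ B A B).inv ≫ A ◁ (ev ▷ B) ≫ A ◁ (λ_ B).hom := by
        rw [whisker_exchange_assoc]
    _ = u ≫ A ◁ ((ρ_ B).inv ≫ B ◁ coev ≫ (α_ B A B).inv ≫ ev ▷ B ≫ (λ_ B).hom) := by
        monoidal
    _ = u := by simp [reassoc_of% hsnake]

lemma cap_comp_braiding_slide {U V W : C} (e : U ⊗ V ⟶ 𝟙_ C) :
    (α_ U W V).hom ≫ U ◁ (β_ W V).hom ≫ (α_ U V W).inv ≫ e ▷ W ≫ (λ_ W).hom
    = (β_ U W).hom ▷ V ≫ (α_ W U V).hom ≫ W ◁ e ≫ (ρ_ W).hom := by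
  rw [← braiding_leftUnitor W, BraidedCategory.braiding_naturality_right_assoc,
    BraidedCategory.braiding_tensor_right_hom]
  simp only [Category.assoc, Iso.hom_inv_id_assoc]
  rw [← comp_whiskerRight_assoc, SymmetricCategory.symmetry]
  rw [id_whiskerRight, Category.id_comp]

namespace PivData

lemma cL_eq_zigzag (P : PivData C) :
    P.cL = (λ_ P.X).inv ≫ (P.coevd ≫ (β_ P.Xd P.X).hom) ▷ P.X ≫
      (α_ P.X P.Xd P.X).hom ≫ P.X ◁ P.ev ≫ (ρ_ P.X).hom := by
  rw [cL, cap_comp_braiding_slide P.ev, comp_whiskerRight_assoc]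

lemma dual_cR_eq_zigzag (P : PivData C) :
    P.dual.cR = (ρ_ P.Xd).inv ≫ P.Xd ◁ (P.coevd ≫ (β_ P.Xd P.X).hom) ≫
      (α_ P.Xd P.X P.Xd).inv ≫ P.ev ▷ P.Xd ≫ (λ_ P.Xd).hom := by
  change (ρ_ P.Xd).inv ≫ P.Xd ◁ P.coevd ≫ (α_ P.Xd P.Xd P.X).inv ≫
      (β_ P.Xd P.Xd).hom ▷ P.X ≫ (α_ P.Xd P.Xd P.X).hom ≫ P.Xd ◁ P.ev ≫ (ρ_ P.Xd).hom = _
  rw [← cap_comp_braiding_slide P.ev, Iso.inv_hom_id_assoc, whiskerLeft_comp_assoc]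

end PivData

/-- In a symmetric pivotal setting, the right curl of the dual is the mate of the
inverse of the right curl (the left curl): `γ_{X*} = (γ_X⁻¹)*`. -/
theorem curl_dual (P : PivData C) (hP : P.IsPivotal) :
    P.dual.cR = PivData.mate P P P.cL := by
  obtain ⟨⟨-, hsnake⟩, -⟩ := hP
  rw [P.dual_cR_eq_zigzag, PivData.mate, P.cL_eq_zigzag, ← whiskerLeft_comp_assoc,
    coev_comp_zigzag_whiskerRight P.ev P.coev hsnake]
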